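/- arXiv:1310.5132 — 7 statements merged into one kernel-verified Lean document; each statement's English description precedes it below -/
import Mathlib

section
/- The r-tuple (u_0, u_{-1}, …, u_{-r+1}) is a basis of the B_r-module K_r := ker(D^r − e_1 D^{r-1} + … + (−1)^r e_r : B_r[[t]] → B_r[[t]]); that is, each u_{-i} with 0 ≤ i ≤ r−1 lies in K_r, they are linearly independent over B_r, and they span K_r over B_r. -/
/-!
The exponential generating function `a ↦ ∑ aₙ tⁿ / n!` is an isomorphism from sequences to power
series that turns `D` into the shift `a ↦ (a (n + 1))ₙ`. It therefore identifies `K_r` with the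
solutions of the monic linear recurrence `∑_{i ≤ r} (-1)ⁱ eᵢ a (n + r - i) = 0`, a free module with
the first `r` terms as coordinates. The shifts `n ↦ h (n - m)`, `m < r`, solve this recurrence
because `E(-t) H(t) = 1`, and their initial values `h (j - i)` form a unitriangular matrix, so they
are a basis of the solutions.
-/

open Finset PowerSeries

theorem Matrix.isUnit_of_isUpperTriangular {R m : Type*} [CommRing R] [Fintype m]
    [DecidableEq m] [LinearOrder m] {M : Matrix m m R} (hM : M.IsUpperTriangular)
    (hdiag : ∀ i, IsUnit (M i i)) : IsUnit M := by
  rw [isUnit_iff_isUnit_det, det_of_isUpperTriangular hM]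
  exact IsUnit.prod_univ_iff.mpr hdiag

theorem linearIndependent_of_isUnit_initialValues {R : Type*} [CommRing R] {r : ℕ}
    {s : Fin r → ℕ → R} (hs : IsUnit (Matrix.of fun i j : Fin r => s i j)) :
    LinearIndependent R s := by
  refine Fintype.linearIndependent_iff.mpr fun c hc =>
    congrFun (Matrix.vecMul_injective_of_isUnit hs ?_)
  ext j
  simpa [Matrix.vecMul, dotProduct] using congrFun hc j

namespace LinearRecurrence

variable {R : Type*} [CommRing R]

theorem span_eq_solSpace_of_isUnit (E : LinearRecurrence R) {s : Fin E.order → ℕ → R}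
    (hsol : ∀ i, E.IsSolution (s i)) (hs : IsUnit (Matrix.of fun i j : Fin E.order => s i j)) :
    Submodule.span R (Set.range s) = E.solSpace := by
  refine le_antisymm (Submodule.span_le.mpr (Set.range_subset_iff.mpr hsol)) fun a ha => ?_
  obtain ⟨c, hc⟩ := Matrix.vecMul_surjective_iff_isUnit.mpr hs fun j => a j
  have hcomb : ∑ i, c i • s i ∈ E.solSpace :=
    Submodule.sum_mem _ fun i _ => Submodule.smul_mem _ _ (hsol i)
  refine (Submodule.mem_span_range_iff_exists_fun R).mpr
    ⟨c, (E.eq_iff_eqOn_range_order _ _ hcomb ha).mpr fun n hn => ?_⟩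
  simpa [Matrix.vecMul, dotProduct] using congrFun hc ⟨n, mem_range.mp hn⟩

/-- The recurrence `∑ i ∈ range (r + 1), p i * a (n + (r - i)) = 0` solved for `a (n + r)`:
`p 0` is not recorded and is meant to be `1`. -/
def ofMonic (r : ℕ) (p : ℕ → R) : LinearRecurrence R := ⟨r, fun i => -p (r - (i : ℕ))⟩

variable {r : ℕ} {p : ℕ → R}

theorem isSolution_ofMonic_iff (hp : p 0 = 1) {a : ℕ → R} :
    (ofMonic r p).IsSolution a ↔ ∀ n, ∑ i ∈ range (r + 1), p i * a (n + (r - i)) = 0 := by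
  refine forall_congr' fun n => ?_
  change a (n + r) = ∑ i : Fin r, -p (r - i) * a (n + i) ↔ _
  have hsplit : ∑ i ∈ range (r + 1), p i * a (n + (r - i)) =
      a (n + r) + ∑ i : Fin r, p (r - i) * a (n + i) := by
    rw [← sum_range_reflect, sum_range_succ, add_comm,
      Fin.sum_univ_eq_sum_range (fun i => p (r - i) * a (n + i))]
    congr 1
    · simp [hp]
    · refine sum_congr rfl fun j hj => ?_
      rw [Nat.add_sub_cancel, Nat.sub_sub_self (mem_range.mp hj).le]
  rw [hsplit, ← eq_neg_iff_add_eq_zero]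
  simp only [neg_mul, sum_neg_distrib]

theorem isSolution_ofMonic_comp_sub (hp : p 0 = 1) {h : ℤ → R}
    (hconv : ∀ n : ℤ, ∑ i ∈ range (r + 1), p i * h (n - i) = if n = 0 then 1 else 0)
    {m : ℕ} (hm : m < r) : (ofMonic r p).IsSolution fun n => h (n - m) := by
  refine (isSolution_ofMonic_iff hp).mpr fun n => ?_
  have hsum := hconv (n + r - m)
  rw [if_neg (by omega)] at hsum
  rw [← hsum]
  refine sum_congr rfl fun i hi => ?_
  have := mem_range.mp hi
  congr 2
  omega

end LinearRecurrence

namespace PowerSeries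

variable {R : Type*} [CommRing R] [Algebra ℚ R]

open Nat in
noncomputable def egf : (ℕ → R) ≃ₗ[R] R⟦X⟧ where
  toFun a := mk fun n => (n ! : ℚ)⁻¹ • a n
  invFun f n := (n ! : ℚ) • coeff n f
  map_add' a b := by ext; simp
  map_smul' c a := by ext; simp
  left_inv a := by funext n; simp [smul_smul, n.factorial_ne_zero]
  right_inv f := by ext n; simp [smul_smul, n.factorial_ne_zero]

open Nat in
@[simp]
theorem coeff_egf (a : ℕ → R) (n : ℕ) : coeff n (egf a) = (n ! : ℚ)⁻¹ • a n :=
  coeff_mk n fun n => (n ! : ℚ)⁻¹ • a n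

theorem derivative_egf (a : ℕ → R) : d⁄dX R (egf a) = egf fun n => a (n + 1) := by
  ext n
  rw [coeff_derivative, coeff_egf, coeff_egf, mul_comm, ← Nat.cast_succ, ← nsmul_eq_mul,
    ← Nat.cast_smul_eq_nsmul ℚ, smul_smul, Nat.factorial_succ]
  congr 1
  have := n.factorial_ne_zero
  field_simp
  push_cast
  ring

theorem iterate_derivative_egf (a : ℕ → R) (k : ℕ) :
    (d⁄dX R)^[k] (egf a) = egf fun n => a (n + k) := by
  induction k with
  | zero => rfl
  | succ k ih =>
    rw [Function.iterate_succ_apply', ih, derivative_egf]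
    simp only [Nat.add_right_comm]
    rfl

theorem sum_C_mul_iterate_derivative_egf (r : ℕ) (p a : ℕ → R) :
    ∑ i ∈ range (r + 1), C (p i) * (d⁄dX R)^[r - i] (egf a) =
      egf fun n => ∑ i ∈ range (r + 1), p i * a (n + (r - i)) := by
  simp_rw [iterate_derivative_egf, ← smul_eq_C_mul, ← map_smul, ← map_sum]
  congr 1
  ext n
  simp

theorem sum_C_mul_iterate_derivative_eq_zero_iff {r : ℕ} {p : ℕ → R} (hp : p 0 = 1)
    (ψ : R⟦X⟧) :
    ∑ i ∈ range (r + 1), C (p i) * (d⁄dX R)^[r - i] ψ = 0 ↔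
      (LinearRecurrence.ofMonic r p).IsSolution (egf.symm ψ) := by
  rw [LinearRecurrence.isSolution_ofMonic_iff hp, ← egf.apply_symm_apply ψ,
    sum_C_mul_iterate_derivative_egf, LinearEquiv.symm_apply_apply, LinearEquiv.map_eq_zero_iff,
    funext_iff]
  rfl

end PowerSeries

open LinearRecurrence

theorem stmt_3_general (r : ℕ)
    (e : ℕ → MvPolynomial (Fin r) ℚ)
    (he0 : e 0 = 1)
    (h : ℤ → MvPolynomial (Fin r) ℚ)
    (hhneg : ∀ n : ℤ, n < 0 → h n = 0)
    (hconv : ∀ n : ℤ,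
      ∑ i ∈ Finset.range (r + 1),
          (-1 : MvPolynomial (Fin r) ℚ) ^ i * e i * h (n - (i : ℤ)) =
        if n = 0 then 1 else 0)
    (u : ℤ → PowerSeries (MvPolynomial (Fin r) ℚ))
    (hu : ∀ j : ℤ, u j = PowerSeries.mk fun n : ℕ => (n.factorial : ℚ)⁻¹ • h ((n : ℤ) + j))
    (D : PowerSeries (MvPolynomial (Fin r) ℚ) → PowerSeries (MvPolynomial (Fin r) ℚ))
    (hD : ∀ ψ : PowerSeries (MvPolynomial (Fin r) ℚ), D ψ = PowerSeries.mk fun n : ℕ =>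
      ((n : MvPolynomial (Fin r) ℚ) + 1) * PowerSeries.coeff (R := MvPolynomial (Fin r) ℚ) (n + 1) ψ)
    (L : PowerSeries (MvPolynomial (Fin r) ℚ) → PowerSeries (MvPolynomial (Fin r) ℚ))
    (hL : ∀ ψ : PowerSeries (MvPolynomial (Fin r) ℚ), L ψ =
      ∑ i ∈ Finset.range (r + 1),
        PowerSeries.C (R := MvPolynomial (Fin r) ℚ) ((-1 : MvPolynomial (Fin r) ℚ) ^ i * e i) * D^[r - i] ψ) :
    (∀ i : Fin r, L (u (-((i : ℕ) : ℤ))) = 0) ∧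
    (∀ c : Fin r → MvPolynomial (Fin r) ℚ,
      (∑ i : Fin r, PowerSeries.C (R := MvPolynomial (Fin r) ℚ) (c i) * u (-((i : ℕ) : ℤ))) = 0 → ∀ i, c i = 0) ∧
    (∀ ψ : PowerSeries (MvPolynomial (Fin r) ℚ), L ψ = 0 →
      ∃ c : Fin r → MvPolynomial (Fin r) ℚ,
        ψ = ∑ i : Fin r, PowerSeries.C (R := MvPolynomial (Fin r) ℚ) (c i) * u (-((i : ℕ) : ℤ))) := by
  set p : ℕ → MvPolynomial (Fin r) ℚ := fun i => (-1) ^ i * e i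
  have hp0 : p 0 = 1 := by simp [p, he0]
  have h0 : h 0 = 1 := by
    have hconv0 := hconv 0
    rw [if_pos rfl, sum_range_succ',
      sum_eq_zero fun i _ => by rw [hhneg _ (by omega), mul_zero]] at hconv0
    simpa [he0] using hconv0
  obtain rfl : D = d⁄dX _ := funext fun ψ => by
    ext n
    rw [hD, coeff_mk, coeff_derivative, mul_comm]
  have hker (ψ) : L ψ = 0 ↔ (ofMonic r p).IsSolution (egf.symm ψ) := by
    rw [hL]
    exact sum_C_mul_iterate_derivative_eq_zero_iff hp0 ψ
  set s : Fin r → ℕ → MvPolynomial (Fin r) ℚ := fun i n => h ((n : ℤ) - (i : ℕ))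
  have hus (i : Fin r) : u (-((i : ℕ) : ℤ)) = egf (s i) := by
    rw [hu]
    ext n
    simp [s, sub_eq_add_neg]
  have hsol (i : Fin r) : (ofMonic r p).IsSolution (s i) :=
    isSolution_ofMonic_comp_sub hp0 hconv i.2
  have hs : IsUnit (Matrix.of fun i j : Fin r => s i j) :=
    Matrix.isUnit_of_isUpperTriangular (fun i j (hji : (j : ℕ) < i) => hhneg _ (by omega))
      fun i => by simp [s, h0]
  have hcomb (c : Fin r → MvPolynomial (Fin r) ℚ) :
      ∑ i, C (c i) * u (-((i : ℕ) : ℤ)) = egf (∑ i, c i • s i) := by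
    simp [hus, smul_eq_C_mul]
  refine ⟨fun i => ?_, fun c hc => ?_, fun ψ hψ => ?_⟩
  · rw [hker, hus, LinearEquiv.symm_apply_apply]
    exact hsol i
  · rw [hcomb, egf.map_eq_zero_iff] at hc
    exact Fintype.linearIndependent_iff.mp
      (linearIndependent_of_isUnit_initialValues (s := s) hs) c hc
  · obtain ⟨c, hc⟩ : ∃ c : Fin r → MvPolynomial (Fin r) ℚ, ∑ i, c i • s i = egf.symm ψ :=
      (Submodule.mem_span_range_iff_exists_fun _).mp
        ((span_eq_solSpace_of_isUnit (ofMonic r p) (s := s) hsol hs).ge ((hker ψ).mp hψ))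
    exact ⟨c, by rw [hcomb, hc, LinearEquiv.apply_symm_apply]⟩

theorem stmt_3 (r : ℕ) (hr : 1 ≤ r)
    (e : ℕ → MvPolynomial (Fin r) ℚ)
    (he0 : e 0 = 1)
    (heX : ∀ i : Fin r, e ((i : ℕ) + 1) = MvPolynomial.X i)
    (heTop : ∀ i : ℕ, r < i → e i = 0)
    (h : ℤ → MvPolynomial (Fin r) ℚ)
    (hhneg : ∀ n : ℤ, n < 0 → h n = 0)
    (hconv : ∀ n : ℤ,
      ∑ i ∈ Finset.range (r + 1),
          (-1 : MvPolynomial (Fin r) ℚ) ^ i * e i * h (n - (i : ℤ)) =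
        if n = 0 then 1 else 0)
    (u : ℤ → PowerSeries (MvPolynomial (Fin r) ℚ))
    (hu : ∀ j : ℤ, u j = PowerSeries.mk fun n : ℕ => (n.factorial : ℚ)⁻¹ • h ((n : ℤ) + j))
    (D : PowerSeries (MvPolynomial (Fin r) ℚ) → PowerSeries (MvPolynomial (Fin r) ℚ))
    (hD : ∀ ψ : PowerSeries (MvPolynomial (Fin r) ℚ), D ψ = PowerSeries.mk fun n : ℕ =>
      ((n : MvPolynomial (Fin r) ℚ) + 1) * PowerSeries.coeff (R := MvPolynomial (Fin r) ℚ) (n + 1) ψ)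
    (L : PowerSeries (MvPolynomial (Fin r) ℚ) → PowerSeries (MvPolynomial (Fin r) ℚ))
    (hL : ∀ ψ : PowerSeries (MvPolynomial (Fin r) ℚ), L ψ =
      ∑ i ∈ Finset.range (r + 1),
        PowerSeries.C (R := MvPolynomial (Fin r) ℚ) ((-1 : MvPolynomial (Fin r) ℚ) ^ i * e i) * D^[r - i] ψ) :
    (∀ i : Fin r, L (u (-((i : ℕ) : ℤ))) = 0) ∧
    (∀ c : Fin r → MvPolynomial (Fin r) ℚ,
      (∑ i : Fin r, PowerSeries.C (R := MvPolynomial (Fin r) ℚ) (c i) * u (-((i : ℕ) : ℤ))) = 0 → ∀ i, c i = 0) ∧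
    (∀ ψ : PowerSeries (MvPolynomial (Fin r) ℚ), L ψ = 0 →
      ∃ c : Fin r → MvPolynomial (Fin r) ℚ,
        ψ = ∑ i : Fin r, PowerSeries.C (R := MvPolynomial (Fin r) ℚ) (c i) * u (-((i : ℕ) : ℤ))) :=
  stmt_3_general r e he0 h hhneg hconv u hu D hD L hL
end

section
/- In the ring of formal power series in z with coefficients in B_r[[t]], the following identity holds: (Σ_{i≥0} u_{i-r} z^{i}) · E_r(z) = Σ_{i=0}^{r} E_i(z) z^{r-i} u_{-i}, where E_i(z) := Σ_{k=0}^{i} (−1)^k e_k z^k. (Equivalently, Σ_{i ≥ -r} u_i z^i = (1/E_r(z)) Σ_{i=0}^{r} (E_i(z)/z^i) u_{-i} as a Laurent series in z.) -/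
/-!
Compare coefficients of `z ^ n`. For `n ≤ r` both sides equal `∑_{k ≤ n} (-1)^k e_k u_{n-k-r}`
(on the right after the reindexing `i = r - n + k`). For `n > r` the right side has no `z ^ n`
term, and the left coefficient `∑_k (-1)^k e_k u_{n-r-k}` vanishes: its `t ^ m` coefficient is
`∑_k (-1)^k e_k h_{m+n-r-k} / m! = 0`, by the recursion defining `h`.
-/

open Finset PowerSeries

namespace PowerSeries

section PartialSum

variable {A : Type*} [CommRing A]

noncomputable def partialSum (c : ℕ → A) (m : ℕ) : A⟦X⟧ :=
  ∑ k ∈ range (m + 1), C (c k) * X ^ k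

theorem coeff_partialSum (c : ℕ → A) (m n : ℕ) :
    coeff n (partialSum c m) = if n ≤ m then c n else 0 := by
  simp [partialSum]

theorem coeff_mul_partialSum (f : A⟦X⟧) (c : ℕ → A) (m n : ℕ) :
    coeff n (f * partialSum c m) = ∑ k ∈ range (min n m + 1), c k * coeff (n - k) f := by
  have hrange : (range (m + 1)).filter (· ≤ n) = range (min n m + 1) := by
    ext k; simp only [mem_filter, mem_range]; omega
  simp only [partialSum, mul_sum, map_sum, mul_left_comm f, coeff_C_mul, coeff_mul_X_pow',
    mul_ite, mul_zero]
  rw [← sum_filter, hrange]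

theorem coeff_sum_partialSum_mul_X_pow_mul_C (c a : ℕ → A) (r n : ℕ) :
    coeff n (∑ i ∈ range (r + 1), partialSum c i * X ^ (r - i) * C (a i)) =
      if n ≤ r then ∑ k ∈ range (n + 1), c k * a (r - n + k) else 0 := by
  have hterm : ∀ i ∈ range (r + 1), coeff n (partialSum c i * X ^ (r - i) * C (a i)) =
      if n ≤ r ∧ r - n ≤ i then c (n + i - r) * a i else 0 := by
    intro i hi
    rw [mem_range] at hi
    rw [coeff_mul_C, coeff_mul_X_pow', coeff_partialSum]
    by_cases hn : n ≤ r ∧ r - n ≤ i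
    · rw [if_pos (by omega), if_pos (by omega), if_pos hn, show n - (r - i) = n + i - r by omega]
    · rw [if_neg hn]
      split_ifs <;> first | omega | simp
  rw [map_sum, sum_congr rfl hterm]
  split_ifs with hn
  · simp only [hn, true_and]
    rw [← sum_filter]
    have hIco : (range (r + 1)).filter (r - n ≤ ·) = Ico (r - n) (r + 1) := by
      ext i; simp only [mem_filter, mem_range, mem_Ico]; omega
    rw [hIco, sum_Ico_eq_sum_range, show r + 1 - (r - n) = n + 1 by omega]
    refine sum_congr rfl fun k hk => ?_
    rw [mem_range] at hk
    rw [show n + (r - n + k) - r = k by omega]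
  · simp [hn]

theorem mk_mul_partialSum_eq_sum {c : ℕ → A} {v : ℤ → A} {r : ℕ}
    (hv : ∀ j : ℤ, 0 < j → ∑ k ∈ range (r + 1), c k * v (j - k) = 0) :
    mk (fun i : ℕ => v (i - r)) * partialSum c r =
      ∑ i ∈ range (r + 1), partialSum c i * X ^ (r - i) * C (v (-i)) := by
  ext n
  have hcoeff : ∀ k ≤ n, coeff (n - k) (mk fun i : ℕ => v (i - r)) = v (n - r - k) := by
    intro k hk
    rw [coeff_mk]
    congr 1
    omega
  rw [coeff_mul_partialSum, coeff_sum_partialSum_mul_X_pow_mul_C]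
  split_ifs with hn
  · rw [min_eq_left hn]
    refine sum_congr rfl fun k hk => ?_
    rw [mem_range] at hk
    rw [hcoeff k (by omega)]
    congr 2
    omega
  · rw [min_eq_right (by omega), ← hv (n - r) (by omega)]
    refine sum_congr rfl fun k hk => ?_
    rw [mem_range] at hk
    rw [hcoeff k (by omega)]

end PartialSum

theorem sum_C_mul_mk_smul_eq_zero {K R : Type*} [CommSemiring K] [CommRing R] [Algebra K R]
    {s : ℕ → R} {h : ℤ → R} {r : ℕ}
    (hs : ∀ n : ℤ, 0 < n → ∑ k ∈ range (r + 1), s k * h (n - k) = 0) (a : ℕ → K) {j : ℤ}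
    (hj : 0 < j) :
    ∑ k ∈ range (r + 1), C (s k) * mk (fun n : ℕ => a n • h (n + (j - k))) = 0 := by
  ext m
  simp only [map_sum, coeff_C_mul, coeff_mk, mul_smul_comm, ← smul_sum, map_zero,
    ← add_sub_assoc]
  rw [hs _ (by omega), smul_zero]

end PowerSeries

theorem stmt_6_general (r : ℕ)
    (e : ℕ → MvPolynomial (Fin r) ℚ)
    (h : ℤ → MvPolynomial (Fin r) ℚ)
    (hconv : ∀ n : ℤ,
      ∑ i ∈ Finset.range (r + 1),
          (-1 : MvPolynomial (Fin r) ℚ) ^ i * e i * h (n - (i : ℤ)) =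
        if n = 0 then 1 else 0)
    (u : ℤ → PowerSeries (MvPolynomial (Fin r) ℚ))
    (hu : ∀ j : ℤ, u j = PowerSeries.mk fun n : ℕ => (n.factorial : ℚ)⁻¹ • h ((n : ℤ) + j))
    (E : ℕ → PowerSeries (PowerSeries (MvPolynomial (Fin r) ℚ)))
    (hE : ∀ m : ℕ, E m = ∑ k ∈ Finset.range (m + 1),
      PowerSeries.C (R := PowerSeries (MvPolynomial (Fin r) ℚ)) (PowerSeries.C (R := MvPolynomial (Fin r) ℚ) ((-1 : MvPolynomial (Fin r) ℚ) ^ k * e k)) * PowerSeries.X ^ k) :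
    (PowerSeries.mk fun i : ℕ => u ((i : ℤ) - (r : ℤ))) * E r =
      ∑ i ∈ Finset.range (r + 1),
        E i * PowerSeries.X ^ (r - i) * PowerSeries.C (R := PowerSeries (MvPolynomial (Fin r) ℚ)) (u (-(i : ℤ))) := by
  obtain rfl : E = partialSum fun k => C ((-1) ^ k * e k) :=
    funext fun m => by rw [hE, partialSum]
  refine mk_mul_partialSum_eq_sum fun j hj => ?_
  simp only [hu]
  exact sum_C_mul_mk_smul_eq_zero (fun n hn => (hconv n).trans (if_neg hn.ne')) _ hj

theorem stmt_6 (r : ℕ) (hr : 1 ≤ r)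
    (e : ℕ → MvPolynomial (Fin r) ℚ)
    (he0 : e 0 = 1)
    (heX : ∀ i : Fin r, e ((i : ℕ) + 1) = MvPolynomial.X i)
    (heTop : ∀ i : ℕ, r < i → e i = 0)
    (h : ℤ → MvPolynomial (Fin r) ℚ)
    (hhneg : ∀ n : ℤ, n < 0 → h n = 0)
    (hconv : ∀ n : ℤ,
      ∑ i ∈ Finset.range (r + 1),
          (-1 : MvPolynomial (Fin r) ℚ) ^ i * e i * h (n - (i : ℤ)) =
        if n = 0 then 1 else 0)
    (u : ℤ → PowerSeries (MvPolynomial (Fin r) ℚ))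
    (hu : ∀ j : ℤ, u j = PowerSeries.mk fun n : ℕ => (n.factorial : ℚ)⁻¹ • h ((n : ℤ) + j))
    (E : ℕ → PowerSeries (PowerSeries (MvPolynomial (Fin r) ℚ)))
    (hE : ∀ m : ℕ, E m = ∑ k ∈ Finset.range (m + 1),
      PowerSeries.C (R := PowerSeries (MvPolynomial (Fin r) ℚ)) (PowerSeries.C (R := MvPolynomial (Fin r) ℚ) ((-1 : MvPolynomial (Fin r) ℚ) ^ k * e k)) * PowerSeries.X ^ k) :
    (PowerSeries.mk fun i : ℕ => u ((i : ℤ) - (r : ℤ))) * E r =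
      ∑ i ∈ Finset.range (r + 1),
        E i * PowerSeries.X ^ (r - i) * PowerSeries.C (R := PowerSeries (MvPolynomial (Fin r) ℚ)) (u (-(i : ℤ))) :=
  stmt_6_general r e h hconv u hu E hE
end

section
/- Let λ = (λ_1 ≥ … ≥ λ_r ≥ 0) be a partition with at most r parts and let v be an indeterminate. Define the sequence H' = (h'_n)_{n∈ℤ} in B_r[v] by h'_n := h_n − v·h_{n−1}. Then Δ_λ(H') = Σ_{j=0}^{r} (−1)^j v^j Δ_{λ−j}(H_r) in B_r[v]; that is, the Schur determinant of the transformed sequence equals the signed sum over all ways of subtracting a vertical strip of size j from λ. -/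
noncomputable def schurDet {R : Type*} [CommRing R] {r : ℕ} (a : ℤ → R) (lam : Fin r → ℤ) : R :=
  Matrix.det (Matrix.of fun i j : Fin r => a (lam j - ((j : ℕ) : ℤ) + ((i : ℕ) : ℤ)))

open Classical in
/-- `Δ_{λ−j}(a)`: sum of `Δ_μ(a)` over all partitions obtained from `λ` by
subtracting a vertical strip of size `j` (i.e. subtracting `0/1` from each part). -/
noncomputable def stripSumSub {R : Type*} [CommRing R] {r : ℕ} (a : ℤ → R) (lam : Fin r → ℕ)
    (j : ℕ) : R :=
  ∑ S ∈ Finset.powersetCard j (Finset.univ : Finset (Fin r)),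
    if (∀ k l : Fin r, k ≤ l →
          ((lam l : ℤ) - (if l ∈ S then 1 else 0)) ≤ ((lam k : ℤ) - (if k ∈ S then 1 else 0))) ∧
        (∀ k : Fin r, (0 : ℤ) ≤ (lam k : ℤ) - (if k ∈ S then 1 else 0))
    then schurDet a (fun k => (lam k : ℤ) - (if k ∈ S then 1 else 0))
    else 0

/-!
Write the columns of the Schur matrix of `h'_n = h_n - v h_{n-1}` as `h + (-v) · (shifted h)`
and expand the determinant multilinearly: choosing the shifted column for the indices in `S`
gives `(-v)^{|S|} Δ_μ(h)` with `μ = λ - 1_S`. When `μ` is not a partition, either two adjacent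
columns of its Schur matrix coincide or its last column only involves `h_n` with `n < 0`,
so these terms vanish and the remaining ones regroup into `Δ_{λ-j}`.
-/

open Finset

section SchurDet

variable {R : Type*} [CommRing R] {r : ℕ}

theorem Matrix.det_add_smul_eq_sum_piecewise {n : Type*} [Fintype n] [DecidableEq n]
    (A B : Matrix n n R) (c : R) :
    (B + c • A).det = ∑ s : Finset n, c ^ #s * Matrix.det (s.piecewise A B) := by
  have hpiece (s : Finset n) : s.piecewise (fun i => c • A i) B =
      s.piecewise (fun i => c • s.piecewise A B i) (s.piecewise A B) := by
    ext i : 1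
    by_cases hi : i ∈ s <;> simp [Finset.piecewise, hi]
  refine (congrArg Matrix.det (add_comm B (c • A))).trans <|
    (Matrix.detRowAlternating.map_add_univ (fun i => c • A i) B).trans (sum_congr rfl fun s _ => ?_)
  rw [hpiece, ← smul_eq_mul, ← prod_const]
  exact Matrix.detRowAlternating.toMultilinearMap.map_piecewise_smul (fun _ => c) _ s

theorem schurDet_eq_det_rows (a : ℤ → R) (μ : Fin r → ℤ) :
    schurDet a μ = (Matrix.of fun j i : Fin r => a (μ j - j + i)).det := by
  rw [schurDet, ← Matrix.det_transpose]
  rfl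

theorem schurDet_map {S : Type*} [CommRing S] (f : R →+* S) (a : ℤ → R) (μ : Fin r → ℤ) :
    schurDet (fun n => f (a n)) μ = f (schurDet a μ) := by
  rw [schurDet, schurDet, RingHom.map_det]
  rfl

theorem schurDet_eq_zero_of_sub_eq (a : ℤ → R) (μ : Fin r → ℤ) {i j : Fin r} (hij : i ≠ j)
    (h : μ i - i = μ j - j) : schurDet a μ = 0 :=
  Matrix.det_zero_of_column_eq hij fun k => by simp only [Matrix.of_apply, h]

theorem schurDet_eq_zero_of_add_le {a : ℤ → R} (ha : ∀ n < 0, a n = 0) {μ : Fin r → ℤ}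
    {j : Fin r} (hj : μ j + r ≤ j) : schurDet a μ = 0 :=
  Matrix.det_eq_zero_of_column_eq_zero j fun i => ha _ (by have := i.isLt; omega)

theorem schurDet_sub_mul_shift (a : ℤ → R) (v : R) (μ : Fin r → ℤ) :
    schurDet (fun n => a n - v * a (n - 1)) μ =
      ∑ s : Finset (Fin r), (-v) ^ #s * schurDet a (fun k => μ k - if k ∈ s then 1 else 0) := by
  simp_rw [schurDet_eq_det_rows]
  have hsplit : (Matrix.of fun j i : Fin r => a (μ j - j + i) - v * a (μ j - j + i - 1)) =
      Matrix.of (fun j i : Fin r => a (μ j - j + i)) +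
        (-v) • Matrix.of (fun j i : Fin r => a (μ j - 1 - j + i)) := by
    ext j i
    simp only [Matrix.of_apply, Matrix.add_apply, Matrix.smul_apply, smul_eq_mul]
    ring_nf
  rw [hsplit, Matrix.det_add_smul_eq_sum_piecewise]
  refine sum_congr rfl fun s _ => ?_
  congr 2
  ext j i
  by_cases hj : j ∈ s <;> simp [hj, Finset.piecewise]

end SchurDet

section StripSum

variable {R : Type*} [CommRing R] {r : ℕ}

def removeStrip (lam : Fin r → ℕ) (S : Finset (Fin r)) : Fin r → ℤ :=
  fun k => lam k - if k ∈ S then 1 else 0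

theorem schurDet_removeStrip_eq_zero {a : ℤ → R} (ha : ∀ n < 0, a n = 0) {lam : Fin r → ℕ}
    (hlam : Antitone lam) {S : Finset (Fin r)}
    (hS : ¬(Antitone (removeStrip lam S) ∧ 0 ≤ removeStrip lam S)) :
    schurDet a (removeStrip lam S) = 0 := by
  cases r with
  | zero => exact absurd ⟨Subsingleton.antitone _, fun k => k.elim0⟩ hS
  | succ n =>
    by_cases hμ : Antitone (removeStrip lam S)
    · obtain ⟨k, hk⟩ : ∃ k, removeStrip lam S k < 0 := by
        simpa [hμ, Pi.le_def] using hS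
      refine schurDet_eq_zero_of_add_le ha (j := Fin.last n) ?_
      have := hμ (Fin.le_last k)
      simp only [Fin.val_last]
      omega
    · obtain ⟨i, hi⟩ : ∃ i : Fin n, removeStrip lam S i.castSucc < removeStrip lam S i.succ := by
        simpa [Fin.antitone_iff_succ_le] using hμ
      -- `λ` is antitone, so an ascent of `λ - 1_S` has height exactly one
      refine schurDet_eq_zero_of_sub_eq a _ (Fin.castSucc_lt_succ (i := i)).ne ?_
      have := hlam (Fin.castSucc_le_succ i)
      simp only [removeStrip, Fin.val_succ, Fin.val_castSucc] at hi ⊢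
      split_ifs at hi ⊢ <;> push_cast <;> omega

theorem sum_pow_mul_schurDet_removeStrip {a : ℤ → R} (ha : ∀ n < 0, a n = 0) {lam : Fin r → ℕ}
    (hlam : Antitone lam) (c : R) :
    ∑ s : Finset (Fin r), c ^ #s * schurDet a (removeStrip lam s) =
      ∑ j ∈ range (r + 1), c ^ j * stripSumSub a lam j := by
  rw [← powerset_univ, sum_powerset, card_univ, Fintype.card_fin]
  refine sum_congr rfl fun j _ => ?_
  rw [stripSumSub, mul_sum]
  refine sum_congr rfl fun s hs => ?_
  rw [(mem_powersetCard.1 hs).2]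
  split_ifs with hμ
  · rfl
  · rw [schurDet_removeStrip_eq_zero ha hlam hμ, mul_zero]

theorem schurDet_sub_mul_shift_eq_sum_stripSumSub {a : ℤ → R} (ha : ∀ n < 0, a n = 0)
    {lam : Fin r → ℕ} (hlam : Antitone lam) (v : R) :
    schurDet (fun n => a n - v * a (n - 1)) (fun k => (lam k : ℤ)) =
      ∑ j ∈ range (r + 1), (-v) ^ j * stripSumSub a lam j := by
  rw [schurDet_sub_mul_shift, ← sum_pow_mul_schurDet_removeStrip ha hlam]
  rfl

theorem map_stripSumSub {S : Type*} [CommRing S] (f : R →+* S) (a : ℤ → R) (lam : Fin r → ℕ)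
    (j : ℕ) : f (stripSumSub a lam j) = stripSumSub (fun n => f (a n)) lam j := by
  rw [stripSumSub, stripSumSub, map_sum]
  refine sum_congr rfl fun s _ => ?_
  rw [apply_ite f, map_zero, schurDet_map]

end StripSum

theorem stmt_9_general (r : ℕ)
    (h : ℤ → MvPolynomial (Fin r) ℚ)
    (hhneg : ∀ n : ℤ, n < 0 → h n = 0)
    (lam : Fin r → ℕ) (hlam : Antitone lam) :
    schurDet (fun n : ℤ => Polynomial.C (h n) - Polynomial.X * Polynomial.C (h (n - 1)))
        (fun k => (lam k : ℤ)) =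
      ∑ j ∈ Finset.range (r + 1),
        (-1 : Polynomial (MvPolynomial (Fin r) ℚ)) ^ j * Polynomial.X ^ j * Polynomial.C (stripSumSub h lam j) := by
  have hCneg : ∀ n < 0, (Polynomial.C (h n) : Polynomial (MvPolynomial (Fin r) ℚ)) = 0 :=
    fun n hn => by rw [hhneg n hn, map_zero]
  refine (schurDet_sub_mul_shift_eq_sum_stripSumSub hCneg hlam Polynomial.X).trans
    (sum_congr rfl fun j _ => ?_)
  rw [map_stripSumSub]
  ring

theorem stmt_9 (r : ℕ) (hr : 1 ≤ r)
    (e : ℕ → MvPolynomial (Fin r) ℚ)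
    (he0 : e 0 = 1)
    (heX : ∀ i : Fin r, e ((i : ℕ) + 1) = MvPolynomial.X i)
    (heTop : ∀ i : ℕ, r < i → e i = 0)
    (h : ℤ → MvPolynomial (Fin r) ℚ)
    (hhneg : ∀ n : ℤ, n < 0 → h n = 0)
    (hconv : ∀ n : ℤ,
      ∑ i ∈ Finset.range (r + 1),
          (-1 : MvPolynomial (Fin r) ℚ) ^ i * e i * h (n - (i : ℤ)) =
        if n = 0 then 1 else 0)
    (lam : Fin r → ℕ) (hlam : Antitone lam) :
    schurDet (fun n : ℤ => Polynomial.C (h n) - Polynomial.X * Polynomial.C (h (n - 1)))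
        (fun k => (lam k : ℤ)) =
      ∑ j ∈ Finset.range (r + 1),
        (-1 : Polynomial (MvPolynomial (Fin r) ℚ)) ^ j * Polynomial.X ^ j * Polynomial.C (stripSumSub h lam j) :=
  stmt_9_general r h hhneg lam hlam
end

section
/- Let λ = (λ_1 ≥ … ≥ λ_r ≥ 0) be a partition with at most r parts and let v be an indeterminate. Define the sequence H∨ = (h∨_n)_{n∈ℤ} in B_r[v] by h∨_n := Σ_{i=0}^{n} h_{n−i} v^i for n ≥ 0 and h∨_n := 0 for n < 0. Then Δ_λ(H_r) = Σ_{j=0}^{r} (−1)^j v^j Δ_{λ−j}(H∨) in B_r[v]; that is, the transformations h_n ↦ h_n − v h_{n−1} and h_n ↦ Σ_{i=0}^{n} h_{n−i} v^i of sequences are mutually inverse at the level of Schur determinants. -/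
/-! Since `h_n = h∨_n - v h∨_{n-1}`, the `j`-th column of the Schur matrix of `H` is the
column of `H∨` for `λ` minus `v` times the column of `H∨` with `λ_j` lowered by one.
Multilinearity of the determinant expands `Δ_λ(H)` as a sum over the sets `S` of lowered
columns. A lowered sequence `λ - 1_S` that is not a partition contributes nothing: either two
adjacent columns coincide, or the last part is negative and, as `H∨` vanishes in negative
degrees, so does the last column. -/

open Finset Polynomial

theorem exists_succ_eq_and_not_le_of_not_antitone {α : Type*} [Preorder α] {r : ℕ}
    {f : Fin r → α} (hf : ¬ Antitone f) : ∃ k l : Fin r, (k : ℕ) + 1 = l ∧ ¬ f l ≤ f k := by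
  obtain _ | n := r
  · exact absurd (fun k => k.elim0) hf
  · obtain ⟨i, hi⟩ := not_forall.mp (mt Fin.antitone_iff_succ_le.mpr hf)
    exact ⟨i.castSucc, i.succ, by simp, hi⟩

theorem eq_C_add_X_mul_of_eq_sum_range {R : Type*} [CommRing R] {a : ℤ → R} {b : ℤ → R[X]}
    (ha : ∀ n < 0, a n = 0) (hb0 : ∀ n < 0, b n = 0)
    (hb : ∀ n : ℕ, b n = ∑ i ∈ range (n + 1), C (a (n - i)) * X ^ i) (n : ℤ) :
    b n = C (a n) + X * b (n - 1) := by
  obtain hn | hn := lt_or_ge n 0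
  · simp [ha n hn, hb0 n hn, hb0 (n - 1) (by omega)]
  lift n to ℕ using hn
  cases n with
  | zero => simpa [hb0 (-1) (by omega)] using hb 0
  | succ m =>
    rw [hb, show ((m + 1 : ℕ) : ℤ) - 1 = m by omega, hb, sum_range_succ', mul_sum]
    simp only [Nat.cast_add, Nat.cast_one, Nat.cast_zero, sub_zero, pow_zero, mul_one, pow_succ]
    rw [add_comm]
    congr 1
    refine sum_congr rfl fun i _ => ?_
    rw [show (m : ℤ) + 1 - (i + 1) = m - i by ring]
    ring

section SchurDet

variable {R : Type*} [CommRing R] {r : ℕ}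

theorem RingHom.map_schurDet {S : Type*} [CommRing S] (f : R →+* S) (a : ℤ → R)
    (lam : Fin r → ℤ) : f (schurDet a lam) = schurDet (f ∘ a) lam := by
  rw [schurDet, f.map_det]
  rfl

theorem schurDet_eq_sum_powerset_of_eq_add_mul_shift {a b : ℤ → R} {c : R}
    (hab : ∀ n, a n = b n + c * b (n - 1)) (lam : Fin r → ℤ) :
    schurDet a lam = ∑ S : Finset (Fin r),
      c ^ S.card * schurDet b (fun k => lam k - if k ∈ S then 1 else 0) := by
  let d := (Matrix.detRowAlternating : (Fin r → R) [⋀^Fin r]→ₗ[R] R).toMultilinearMap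
  let u : Fin r → Fin r → R := fun j i => b (lam j - j + i)
  let w : Fin r → Fin r → R := fun j i => b (lam j - j + i - 1)
  have hlower : ∀ S : Finset (Fin r),
      schurDet b (fun k => lam k - if k ∈ S then 1 else 0) = d (S.piecewise w u) := by
    intro S
    rw [schurDet, ← Matrix.det_transpose]
    congr 1
    ext j i
    by_cases hj : j ∈ S
    · simp only [Matrix.transpose_apply, Matrix.of_apply, piecewise_eq_of_mem _ _ _ hj,
        if_pos hj, w]
      exact congrArg b (by ring)
    · simp [hj, u]
  have hsplit :
      (Matrix.of fun i j : Fin r => a (lam j - j + i)).transpose = (fun j => c • w j) + u := by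
    ext j i
    simp only [Matrix.transpose_apply, Matrix.of_apply, Pi.add_apply, Pi.smul_apply, smul_eq_mul,
      u, w, hab]
    exact add_comm _ _
  rw [schurDet, ← Matrix.det_transpose, hsplit]
  change d _ = _
  rw [d.map_add_univ]
  refine sum_congr rfl fun S _ => ?_
  have hpw : S.piecewise (fun j => c • w j) u
      = S.piecewise (fun j => c • S.piecewise w u j) (S.piecewise w u) := by
    ext j : 1
    by_cases hj : j ∈ S <;> simp [hj]
  rw [hpw, d.map_piecewise_smul (fun _ => c), hlower, prod_const, smul_eq_mul]

theorem schurDet_eq_zero_of_succ_eq_add_one (a : ℤ → R) {lam : Fin r → ℤ} {k l : Fin r}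
    (hkl : (k : ℕ) + 1 = l) (hlam : lam l = lam k + 1) : schurDet a lam = 0 := by
  refine Matrix.det_zero_of_column_eq (i := k) (j := l) (by omega) fun i => ?_
  simp only [Matrix.of_apply]
  congr 1
  omega

theorem schurDet_eq_zero_of_antitone_of_neg {a : ℤ → R} (ha : ∀ n < 0, a n = 0)
    {lam : Fin r → ℤ} (hlam : Antitone lam) {k : Fin r} (hk : lam k < 0) :
    schurDet a lam = 0 := by
  have hkr := k.isLt
  let last : Fin r := ⟨r - 1, by omega⟩
  have hlast : lam last < 0 :=
    (hlam (show k ≤ last from Fin.le_def.2 (show (k : ℕ) ≤ r - 1 by omega))).trans_lt hk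
  refine Matrix.det_eq_zero_of_column_eq_zero last fun i => ha _ ?_
  have := i.isLt
  simp only [last] at hlast ⊢
  omega

theorem schurDet_sub_indicator_eq_zero {a : ℤ → R} (ha : ∀ n < 0, a n = 0) {lam : Fin r → ℕ}
    (hlam : Antitone lam) {S : Finset (Fin r)}
    (hS : ¬ (Antitone (fun k => (lam k : ℤ) - if k ∈ S then 1 else 0) ∧
      ∀ k, 0 ≤ (lam k : ℤ) - if k ∈ S then 1 else 0)) :
    schurDet a (fun k => (lam k : ℤ) - if k ∈ S then 1 else 0) = 0 := by
  by_cases hanti : Antitone (fun k => (lam k : ℤ) - if k ∈ S then 1 else 0)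
  · obtain ⟨k, hk⟩ := not_forall.mp fun h => hS ⟨hanti, h⟩
    exact schurDet_eq_zero_of_antitone_of_neg ha hanti (not_le.mp hk)
  · obtain ⟨k, l, hkl, hlt⟩ := exists_succ_eq_and_not_le_of_not_antitone hanti
    have hle : (lam l : ℤ) ≤ lam k := by exact_mod_cast hlam (Fin.le_def.2 (by omega))
    refine schurDet_eq_zero_of_succ_eq_add_one a hkl ?_
    split_ifs at hlt ⊢ <;> omega

theorem sum_powersetCard_schurDet_sub_indicator {a : ℤ → R} (ha : ∀ n < 0, a n = 0)
    {lam : Fin r → ℕ} (hlam : Antitone lam) (j : ℕ) :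
    ∑ S ∈ powersetCard j univ, schurDet a (fun k => (lam k : ℤ) - if k ∈ S then 1 else 0) =
      stripSumSub a lam j := by
  refine sum_congr rfl fun S _ => ?_
  split_ifs with hS
  · rfl
  · exact schurDet_sub_indicator_eq_zero ha hlam hS

end SchurDet

theorem stmt_10_general (r : ℕ)
    (h : ℤ → MvPolynomial (Fin r) ℚ)
    (hhneg : ∀ n : ℤ, n < 0 → h n = 0)
    (lam : Fin r → ℕ) (hlam : Antitone lam)
    (hv : ℤ → Polynomial (MvPolynomial (Fin r) ℚ))
    (hv0 : ∀ n : ℤ, n < 0 → hv n = 0)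
    (hvdef : ∀ n : ℕ, hv (n : ℤ) =
      ∑ i ∈ Finset.range (n + 1), Polynomial.C (h ((n : ℤ) - (i : ℤ))) * Polynomial.X ^ i) :
    Polynomial.C (schurDet h (fun k => (lam k : ℤ))) =
      ∑ j ∈ Finset.range (r + 1),
        (-1 : Polynomial (MvPolynomial (Fin r) ℚ)) ^ j * Polynomial.X ^ j * stripSumSub hv lam j := by
  have hC : ∀ n, (C ∘ h) n = hv n + (-X) * hv (n - 1) := fun n => by
    rw [Function.comp_apply, eq_C_add_X_mul_of_eq_sum_range hhneg hv0 hvdef n]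
    ring
  calc C (schurDet h (fun k => (lam k : ℤ)))
      = ∑ S : Finset (Fin r), (-X) ^ S.card *
          schurDet hv (fun k => (lam k : ℤ) - if k ∈ S then 1 else 0) := by
        rw [C.map_schurDet, schurDet_eq_sum_powerset_of_eq_add_mul_shift hC]
    _ = ∑ j ∈ range (r + 1), (-X) ^ j * ∑ S ∈ powersetCard j univ,
          schurDet hv (fun k => (lam k : ℤ) - if k ∈ S then 1 else 0) := by
        rw [← powerset_univ, sum_powerset, card_univ, Fintype.card_fin]
        refine sum_congr rfl fun j _ => ?_
        rw [mul_sum]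
        exact sum_congr rfl fun S hS => by rw [(mem_powersetCard.mp hS).2]
    _ = _ := sum_congr rfl fun j _ => by
        rw [sum_powersetCard_schurDet_sub_indicator hv0 hlam]
        ring

theorem stmt_10 (r : ℕ) (hr : 1 ≤ r)
    (e : ℕ → MvPolynomial (Fin r) ℚ)
    (he0 : e 0 = 1)
    (heX : ∀ i : Fin r, e ((i : ℕ) + 1) = MvPolynomial.X i)
    (heTop : ∀ i : ℕ, r < i → e i = 0)
    (h : ℤ → MvPolynomial (Fin r) ℚ)
    (hhneg : ∀ n : ℤ, n < 0 → h n = 0)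
    (hconv : ∀ n : ℤ,
      ∑ i ∈ Finset.range (r + 1),
          (-1 : MvPolynomial (Fin r) ℚ) ^ i * e i * h (n - (i : ℤ)) =
        if n = 0 then 1 else 0)
    (lam : Fin r → ℕ) (hlam : Antitone lam)
    (hv : ℤ → Polynomial (MvPolynomial (Fin r) ℚ))
    (hv0 : ∀ n : ℤ, n < 0 → hv n = 0)
    (hvdef : ∀ n : ℕ, hv (n : ℤ) =
      ∑ i ∈ Finset.range (n + 1), Polynomial.C (h ((n : ℤ) - (i : ℤ))) * Polynomial.X ^ i) :
    Polynomial.C (schurDet h (fun k => (lam k : ℤ))) =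
      ∑ j ∈ Finset.range (r + 1),
        (-1 : Polynomial (MvPolynomial (Fin r) ℚ)) ^ j * Polynomial.X ^ j * stripSumSub hv lam j :=
  stmt_10_general r h hhneg lam hlam hv hv0 hvdef
end

section
/- Let λ = (λ_1 ≥ … ≥ λ_r ≥ 0) be a partition with at most r parts. For n ∈ ℤ let H(λ+n) denote the determinant of the r×r matrix whose first row has entries h_{λ_i + 1 − i + n} (i = 1, …, r) and whose k-th row, for 2 ≤ k ≤ r, has entries h_{λ_i + k − i} (i = 1, …, r). Then for every n ≥ 1, H(λ+n) + (−1)^r h_{n−r} Δ_{(λ_1+1, …, λ_r+1)}(H_r) = 0 in B_r. -/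
/-!
Write `u n := H(λ+n) + (-1)^r h_{n-r} Δ_{λ+1}`. For `m > 0` the defining identity gives the
recurrence `h_m = ∑_{j=1}^r (-1)^{j-1} e_j h_{m-j}`. Once `n ≥ r` every entry of the first row of
`H(λ+n)` has positive index, so by linearity of the determinant in that row both summands of `u`,
hence `u` itself, satisfy this recurrence for `n > r`. It therefore suffices that `u` vanishes for
`1 ≤ n ≤ r`: for `n < r` the first row of `H(λ+n)` repeats row `n + 1` and `h_{n-r} = 0`, while
`H(λ+r)` is the matrix of `Δ_{λ+1}` with its rows cyclically rotated, and `h_0 = 1`.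
-/

open Finset Matrix

theorem eq_zero_of_linear_recurrence {P : Type*} [Semiring P] {r : ℕ} (c : ℕ → P) {u : ℤ → P}
    (hrec : ∀ n : ℤ, r < n → u n = ∑ j ∈ range r, c j * u (n - (j + 1)))
    (hinit : ∀ n : ℤ, 1 ≤ n → n ≤ r → u n = 0) {n : ℤ} (hn : 1 ≤ n) : u n = 0 := by
  induction hN : n.toNat using Nat.strong_induction_on generalizing n with
  | _ N ih =>
    rcases le_or_gt n r with hle | hlt
    · exact hinit n hn hle
    · rw [hrec n hlt]
      refine sum_eq_zero fun j hj => ?_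
      have := mem_range.1 hj
      rw [ih _ (by omega) (by omega) rfl, mul_zero]

theorem det_updateRow_finset_sum {ι R α : Type*} [Fintype ι] [DecidableEq ι] [CommRing R]
    (A : Matrix ι ι R) (i : ι) (s : Finset α) (v : α → ι → R) :
    (A.updateRow i (∑ a ∈ s, v a)).det = ∑ a ∈ s, (A.updateRow i (v a)).det :=
  (detRowAlternating : (ι → R) [⋀^ι]→ₗ[R] R).map_update_sum s i v A

section CompleteHomogeneous

variable {P : Type*} [CommRing P] {r : ℕ} {e : ℕ → P} {h : ℤ → P}

theorem complete_zero_eq_one (he0 : e 0 = 1) (hhneg : ∀ n : ℤ, n < 0 → h n = 0)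
    (hconv : ∀ n : ℤ, ∑ i ∈ range (r + 1), (-1 : P) ^ i * e i * h (n - i) = if n = 0 then 1 else 0) :
    h 0 = 1 := by
  have H := hconv 0
  rw [sum_range_succ', sum_eq_zero fun i _ => by rw [hhneg _ (by omega), mul_zero]] at H
  simpa [he0] using H

theorem complete_eq_sum_of_pos (he0 : e 0 = 1)
    (hconv : ∀ n : ℤ, ∑ i ∈ range (r + 1), (-1 : P) ^ i * e i * h (n - i) = if n = 0 then 1 else 0)
    {m : ℤ} (hm : 0 < m) :
    h m = ∑ j ∈ range r, (-1 : P) ^ j * e (j + 1) * h (m - (j + 1)) := by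
  have H := hconv m
  rw [sum_range_succ', if_neg hm.ne'] at H
  simp only [pow_succ, mul_neg_one, neg_mul, sum_neg_distrib, Nat.cast_add, Nat.cast_one, he0,
    pow_zero, Nat.cast_zero, sub_zero, one_mul] at H
  linear_combination H

end CompleteHomogeneous

section FirstRowShift

variable {P : Type*} {r : ℕ} (h : ℤ → P) (lam : Fin r → ℕ)

/-- The paper's `H(λ+n)`, with rows and columns indexed from `0`. -/
noncomputable def firstRowShiftMatrix (n : ℤ) : Matrix (Fin r) (Fin r) P :=
  Matrix.of fun k i : Fin r =>
    if (k : ℕ) = 0 then h ((lam i : ℤ) - ((i : ℕ) : ℤ) + n)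
    else h ((lam i : ℤ) - ((i : ℕ) : ℤ) + ((k : ℕ) : ℤ))

theorem firstRowShiftMatrix_eq_updateRow [NeZero r] (n : ℤ) :
    firstRowShiftMatrix h lam n =
      (Matrix.of fun k i : Fin r => h (lam i - i + k)).updateRow 0 fun i => h (lam i - i + n) := by
  ext k i
  rcases eq_or_ne k 0 with rfl | hk
  · simp [firstRowShiftMatrix]
  · simp [firstRowShiftMatrix, hk]

theorem det_firstRowShiftMatrix_of_lt [CommRing P] {n : ℤ} (hn : 1 ≤ n) (hnr : n < r) :
    (firstRowShiftMatrix h lam n).det = 0 := by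
  have hr : 0 < r := by omega
  apply det_zero_of_row_eq (i := ⟨0, hr⟩) (j := ⟨n.toNat, by omega⟩)
  · exact Fin.ne_of_val_ne (by dsimp only; omega)
  · ext i
    simp [firstRowShiftMatrix, show n.toNat ≠ 0 by omega, Int.toNat_of_nonneg (by omega : 0 ≤ n)]

theorem det_firstRowShiftMatrix_self [CommRing P] [NeZero r] :
    (firstRowShiftMatrix h lam r).det = -(-1) ^ r * schurDet h (fun k => (lam k : ℤ) + 1) := by
  obtain ⟨s, rfl⟩ : ∃ s, r = s + 1 := Nat.exists_eq_succ_of_ne_zero (NeZero.ne r)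
  have hrot : (Matrix.of fun i j : Fin (s + 1) => h ((lam j + 1 : ℤ) - j + i)) =
      (firstRowShiftMatrix h lam (s + 1 : ℕ)).submatrix (finRotate (s + 1)) id := by
    ext k i
    rw [Matrix.submatrix_apply, firstRowShiftMatrix, Matrix.of_apply, Matrix.of_apply, id,
      coe_finRotate]
    by_cases hk : k = Fin.last s
    · simp only [hk, if_true, Fin.val_last]
      congr 1
      push_cast
      ring
    · simp only [hk, if_false, Nat.succ_ne_zero]
      congr 1
      push_cast
      ring
  have hsq : (-1 : P) ^ (s + s) = 1 := Even.neg_one_pow ⟨s, rfl⟩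
  rw [schurDet, hrot, det_permute, sign_finRotate, Nat.add_sub_cancel]
  simp only [Units.val_pow_eq_pow_val, Units.val_neg, Units.val_one, Int.cast_pow, Int.cast_neg,
    Int.cast_one]
  linear_combination (-(firstRowShiftMatrix h lam (s + 1 : ℕ)).det) * hsq

theorem det_firstRowShiftMatrix_recurrence [CommRing P] [NeZero r] {d : ℕ} (c : ℕ → P)
    (hrec : ∀ m : ℤ, 0 < m → h m = ∑ j ∈ range d, c j * h (m - (j + 1))) {n : ℤ} (hn : r ≤ n) :
    (firstRowShiftMatrix h lam n).det =
      ∑ j ∈ range d, c j * (firstRowShiftMatrix h lam (n - (j + 1))).det := by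
  have hrow : (fun i : Fin r => h (lam i - i + n)) =
      ∑ j ∈ range d, c j • fun i : Fin r => h (lam i - i + (n - (j + 1))) := by
    ext i
    rw [hrec _ (by omega), Finset.sum_apply]
    simp only [Pi.smul_apply, smul_eq_mul, add_sub_assoc]
  simp only [firstRowShiftMatrix_eq_updateRow, hrow, det_updateRow_finset_sum, det_updateRow_smul]

end FirstRowShift

theorem det_firstRowShiftMatrix_add {P : Type*} [CommRing P] {r : ℕ} [NeZero r] {e : ℕ → P}
    {h : ℤ → P} (lam : Fin r → ℕ) (he0 : e 0 = 1) (hhneg : ∀ n : ℤ, n < 0 → h n = 0)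
    (hconv : ∀ n : ℤ, ∑ i ∈ range (r + 1), (-1 : P) ^ i * e i * h (n - i) = if n = 0 then 1 else 0)
    {n : ℤ} (hn : 1 ≤ n) :
    (firstRowShiftMatrix h lam n).det +
      (-1 : P) ^ r * h (n - r) * schurDet h (fun k => (lam k : ℤ) + 1) = 0 := by
  have hrec := fun m (hm : 0 < m) => complete_eq_sum_of_pos he0 hconv hm
  refine eq_zero_of_linear_recurrence (r := r) (fun j => (-1 : P) ^ j * e (j + 1))
    (u := fun n => (firstRowShiftMatrix h lam n).det +
      (-1 : P) ^ r * h (n - r) * schurDet h (fun k => (lam k : ℤ) + 1))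
    (fun m hm => ?_) (fun m hm hmr => ?_) hn
  · rw [det_firstRowShiftMatrix_recurrence h lam _ hrec hm.le, hrec (m - r) (by omega), mul_sum,
      sum_mul, ← sum_add_distrib]
    refine sum_congr rfl fun j _ => ?_
    rw [show m - r - (j + 1) = m - (j + 1) - r by ring]
    ring
  · rcases hmr.lt_or_eq with hlt | rfl
    · simp [det_firstRowShiftMatrix_of_lt h lam hm hlt, hhneg _ (by omega : m - r < 0)]
    · simp [det_firstRowShiftMatrix_self, complete_zero_eq_one he0 hhneg hconv]

theorem stmt_12_general (r : ℕ) (hr : 1 ≤ r)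
    (e : ℕ → MvPolynomial (Fin r) ℚ)
    (he0 : e 0 = 1)
    (h : ℤ → MvPolynomial (Fin r) ℚ)
    (hhneg : ∀ n : ℤ, n < 0 → h n = 0)
    (hconv : ∀ n : ℤ,
      ∑ i ∈ Finset.range (r + 1),
          (-1 : MvPolynomial (Fin r) ℚ) ^ i * e i * h (n - (i : ℤ)) =
        if n = 0 then 1 else 0)
    (lam : Fin r → ℕ) :
    ∀ n : ℤ, 1 ≤ n →
      Matrix.det (Matrix.of fun k i : Fin r =>
        if (k : ℕ) = 0 then h ((lam i : ℤ) - ((i : ℕ) : ℤ) + n)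
        else h ((lam i : ℤ) - ((i : ℕ) : ℤ) + ((k : ℕ) : ℤ))) +
      (-1 : MvPolynomial (Fin r) ℚ) ^ r * h (n - (r : ℤ)) * schurDet h (fun k => (lam k : ℤ) + 1) = 0 := by
  have : NeZero r := ⟨by omega⟩
  exact fun n hn => det_firstRowShiftMatrix_add lam he0 hhneg hconv hn

theorem stmt_12 (r : ℕ) (hr : 1 ≤ r)
    (e : ℕ → MvPolynomial (Fin r) ℚ)
    (he0 : e 0 = 1)
    (heX : ∀ i : Fin r, e ((i : ℕ) + 1) = MvPolynomial.X i)
    (heTop : ∀ i : ℕ, r < i → e i = 0)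
    (h : ℤ → MvPolynomial (Fin r) ℚ)
    (hhneg : ∀ n : ℤ, n < 0 → h n = 0)
    (hconv : ∀ n : ℤ,
      ∑ i ∈ Finset.range (r + 1),
          (-1 : MvPolynomial (Fin r) ℚ) ^ i * e i * h (n - (i : ℤ)) =
        if n = 0 then 1 else 0)
    (lam : Fin r → ℕ) (hlam : Antitone lam) :
    ∀ n : ℤ, 1 ≤ n →
      Matrix.det (Matrix.of fun k i : Fin r =>
        if (k : ℕ) = 0 then h ((lam i : ℤ) - ((i : ℕ) : ℤ) + n)
        else h ((lam i : ℤ) - ((i : ℕ) : ℤ) + ((k : ℕ) : ℤ))) +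
      (-1 : MvPolynomial (Fin r) ℚ) ^ r * h (n - (r : ℤ)) * schurDet h (fun k => (lam k : ℤ) + 1) = 0 :=
  stmt_12_general r hr e he0 h hhneg hconv lam
end

section
/- Let λ = (λ_1 ≥ … ≥ λ_r ≥ 0) be a partition with at most r parts and let v be an indeterminate. Define h∨_n := Σ_{i=0}^{n} h_{n−i} v^i ∈ B_r[v] for n ≥ 0 and h∨_n := 0 for n < 0, and for n ≥ 0 let H(λ−n) denote the determinant of the r×r matrix whose first row has entries h_{λ_i + 1 − i − n} (i = 1, …, r) and whose k-th row, for 2 ≤ k ≤ r, has entries h_{λ_i + k − i}. Then Δ_λ(H∨) = Σ_{n=0}^{λ_1} v^n H(λ−n) in B_r[v], where Δ_λ(H∨) := det(h∨_{λ_j − j + i})_{1≤i,j≤r}. -/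
/-! The recurrence `h∨_{z+1} = h_{z+1} + v h∨_z` says that row `k+1` of `(h∨_{λ_j−j+i})` is
`v` times row `k` plus the corresponding row of `(h_{λ_j−j+i})`. Subtracting these multiples
from the bottom up leaves the determinant unchanged and replaces every row but the first by
`h`-entries. Since `λ_j ≤ λ_1`, the first row is `Σ_{n ≤ λ_1} vⁿ (h_{λ_j−j−n})_j`, and
multilinearity in that row gives the sum. -/

section HCheck

open Polynomial

variable {R : Type*} [CommRing R] {h : ℤ → R} {hv : ℤ → R[X]}

theorem hCheck_eq_sum_range_of_le (hhneg : ∀ n : ℤ, n < 0 → h n = 0)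
    (hv0 : ∀ n : ℤ, n < 0 → hv n = 0)
    (hvdef : ∀ n : ℕ, hv n = ∑ i ∈ Finset.range (n + 1), C (h (n - i)) * X ^ i)
    {z : ℤ} {N : ℕ} (hz : z ≤ N) :
    hv z = ∑ n ∈ Finset.range (N + 1), X ^ n * C (h (z - n)) := by
  rcases lt_or_ge z 0 with hz0 | hz0
  · rw [hv0 z hz0, Finset.sum_eq_zero]
    intro n _
    rw [hhneg (z - n) (by omega), map_zero, mul_zero]
  · lift z to ℕ using hz0
    rw [hvdef z, ← Finset.sum_range_add_sum_Ico _ (by omega : z + 1 ≤ N + 1),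
      Finset.sum_eq_zero (s := Finset.Ico _ _), add_zero]
    · exact Finset.sum_congr rfl fun n _ => mul_comm _ _
    · intro n hn
      rw [hhneg _ (by simp at hn; omega), map_zero, mul_zero]

theorem hCheck_add_one (hhneg : ∀ n : ℤ, n < 0 → h n = 0)
    (hv0 : ∀ n : ℤ, n < 0 → hv n = 0)
    (hvdef : ∀ n : ℕ, hv n = ∑ i ∈ Finset.range (n + 1), C (h (n - i)) * X ^ i) (z : ℤ) :
    hv (z + 1) = C (h (z + 1)) + X * hv z := by
  obtain ⟨N, hN⟩ : ∃ N : ℕ, z + 1 ≤ N := ⟨(z + 1).toNat, Int.self_le_toNat _⟩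
  rw [hCheck_eq_sum_range_of_le hhneg hv0 hvdef (by omega : z + 1 ≤ (N + 1 : ℕ)),
    hCheck_eq_sum_range_of_le hhneg hv0 hvdef (by omega : z ≤ N), Finset.sum_range_succ',
    Finset.mul_sum, add_comm]
  congr 1
  · simp
  · refine Finset.sum_congr rfl fun k _ => ?_
    rw [pow_succ', mul_assoc]
    congr 4
    push_cast
    ring

end HCheck

theorem schurDet_eq_det_updateRow_zero {R : Type*} [CommRing R] {m : ℕ} {a b : ℤ → R} (c : R)
    (hab : ∀ z, a (z + 1) = b (z + 1) + c * a z) (μ : Fin (m + 1) → ℤ) :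
    schurDet a μ = ((Matrix.of fun i j : Fin (m + 1) => b (μ j - j + i)).updateRow 0
      fun j => a (μ j - j)).det := by
  refine Matrix.det_eq_of_forall_row_eq_smul_add_pred (fun _ => c) (fun j => by simp) ?_
  intro i j
  simp only [Matrix.of_apply, Matrix.updateRow_ne (Fin.succ_ne_zero i), Fin.val_succ,
    Fin.val_castSucc, Nat.cast_succ, ← add_assoc, hab]

theorem Matrix.det_updateRow_sum_smul {R : Type*} [CommRing R] {n : Type*} [DecidableEq n]
    [Fintype n] (A : Matrix n n R) (j : n) {α : Type*} (s : Finset α) (c : α → R)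
    (f : α → n → R) :
    (A.updateRow j (∑ a ∈ s, c a • f a)).det = ∑ a ∈ s, c a * (A.updateRow j (f a)).det :=
  (Matrix.detRowAlternating.map_update_sum s j (fun a => c a • f a) A).trans
    (Finset.sum_congr rfl fun a _ => Matrix.detRowAlternating.map_update_smul A j (c a) (f a))

theorem stmt_13_general (r : ℕ) (hr : 1 ≤ r)
    (h : ℤ → MvPolynomial (Fin r) ℚ)
    (hhneg : ∀ n : ℤ, n < 0 → h n = 0)
    (lam : Fin r → ℕ) (hlam : Antitone lam)
    (hv : ℤ → Polynomial (MvPolynomial (Fin r) ℚ))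
    (hv0 : ∀ n : ℤ, n < 0 → hv n = 0)
    (hvdef : ∀ n : ℕ, hv (n : ℤ) =
      ∑ i ∈ Finset.range (n + 1), Polynomial.C (h ((n : ℤ) - (i : ℤ))) * Polynomial.X ^ i) :
    schurDet hv (fun k => (lam k : ℤ)) =
      ∑ n ∈ Finset.range (lam ⟨0, hr⟩ + 1),
        Polynomial.X ^ n * Polynomial.C
          (Matrix.det (Matrix.of fun k i : Fin r =>
            if (k : ℕ) = 0 then h ((lam i : ℤ) - ((i : ℕ) : ℤ) - (n : ℤ))
            else h ((lam i : ℤ) - ((i : ℕ) : ℤ) + ((k : ℕ) : ℤ)))) := by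
  obtain ⟨m, rfl⟩ : ∃ m, r = m + 1 := ⟨r - 1, by omega⟩
  have first_row : (fun j : Fin (m + 1) => hv (lam j - j)) =
      ∑ n ∈ Finset.range (lam ⟨0, hr⟩ + 1),
        (Polynomial.X : Polynomial (MvPolynomial (Fin (m + 1)) ℚ)) ^ n •
          fun j : Fin (m + 1) => Polynomial.C (h (lam j - j - n)) := by
    funext j
    have hj : lam j ≤ lam ⟨0, hr⟩ := hlam (Nat.zero_le j)
    rw [Finset.sum_apply, hCheck_eq_sum_range_of_le hhneg hv0 hvdef (N := lam ⟨0, hr⟩) (by omega)]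
    rfl
  rw [schurDet_eq_det_updateRow_zero (b := fun z => Polynomial.C (h z)) Polynomial.X
    (hCheck_add_one hhneg hv0 hvdef), first_row, Matrix.det_updateRow_sum_smul]
  refine Finset.sum_congr rfl fun n _ => congrArg _ ?_
  rw [RingHom.map_det]
  congr 1
  ext k j
  rcases Fin.eq_zero_or_eq_succ k with rfl | ⟨k, rfl⟩ <;> simp [Matrix.updateRow_apply]

theorem stmt_13 (r : ℕ) (hr : 1 ≤ r)
    (e : ℕ → MvPolynomial (Fin r) ℚ)
    (he0 : e 0 = 1)
    (heX : ∀ i : Fin r, e ((i : ℕ) + 1) = MvPolynomial.X i)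
    (heTop : ∀ i : ℕ, r < i → e i = 0)
    (h : ℤ → MvPolynomial (Fin r) ℚ)
    (hhneg : ∀ n : ℤ, n < 0 → h n = 0)
    (hconv : ∀ n : ℤ,
      ∑ i ∈ Finset.range (r + 1),
          (-1 : MvPolynomial (Fin r) ℚ) ^ i * e i * h (n - (i : ℤ)) =
        if n = 0 then 1 else 0)
    (lam : Fin r → ℕ) (hlam : Antitone lam)
    (hv : ℤ → Polynomial (MvPolynomial (Fin r) ℚ))
    (hv0 : ∀ n : ℤ, n < 0 → hv n = 0)
    (hvdef : ∀ n : ℕ, hv (n : ℤ) =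
      ∑ i ∈ Finset.range (n + 1), Polynomial.C (h ((n : ℤ) - (i : ℤ))) * Polynomial.X ^ i) :
    schurDet hv (fun k => (lam k : ℤ)) =
      ∑ n ∈ Finset.range (lam ⟨0, hr⟩ + 1),
        Polynomial.X ^ n * Polynomial.C
          (Matrix.det (Matrix.of fun k i : Fin r =>
            if (k : ℕ) = 0 then h ((lam i : ℤ) - ((i : ℕ) : ℤ) - (n : ℤ))
            else h ((lam i : ℤ) - ((i : ℕ) : ℤ) + ((k : ℕ) : ℤ)))) :=
  stmt_13_general r hr h hhneg lam hlam hv hv0 hvdef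
end

section
/- (Pieri formula) For every 0 ≤ j ≤ r and every partition λ = (λ_1 ≥ … ≥ λ_r ≥ 0) with at most r parts, e_j · Δ_λ(H_r) = Δ_{λ+j}(H_r) in B_r, where Δ_{λ+j}(H_r) is the sum of Δ_μ(H_r) over all partitions μ = (λ_1 + i_1, …, λ_r + i_r) with each i_k ∈ {0,1}, Σ i_k = j, and μ nonincreasing. -/
open Classical in
/-- `Δ_{λ+j}(a)`: sum of `Δ_μ(a)` over all partitions obtained from `λ` by
adding a vertical strip of size `j`. -/
noncomputable def stripSumAdd {R : Type*} [CommRing R] {r : ℕ} (a : ℤ → R) (lam : Fin r → ℕ)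
    (j : ℕ) : R :=
  ∑ S ∈ Finset.powersetCard j (Finset.univ : Finset (Fin r)),
    if (∀ k l : Fin r, k ≤ l →
          ((lam l : ℤ) + (if l ∈ S then 1 else 0)) ≤ ((lam k : ℤ) + (if k ∈ S then 1 else 0)))
    then schurDet a (fun k => (lam k : ℤ) + (if k ∈ S then 1 else 0))
    else 0

/-! Let `V` be the Jacobi–Trudi matrix `(h_{λ_c - c + i})_{i,c}` and `V'` the same matrix with
every index raised by one. The relation between `e` and `h` is the recurrence
`h_n = Σ_{i ≥ 1} (-1)^(i+1) e_i h_{n-i}` (`n ≠ 0`), which says `V' = N V` for the companion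
matrix `N` of `Σ_i (-1)^i e_i t^(r-i)`. Hence
`det (V + X V') = det (1 + X N) · det V = (Σ_m e_m X^m) · det V`.
Expanding the left side column by column, its `X^j`-coefficient is the sum of `Δ_{λ + 1_S}` over
the `j`-subsets `S`, and the terms in which `λ + 1_S` is not a partition vanish, having two equal
adjacent columns. -/

open Polynomial Matrix Finset

section Determinants

variable {n R : Type*} [Fintype n] [DecidableEq n] [CommRing R]

theorem det_add_eq_sum_piecewise_cols (A B : Matrix n n R) :
    (A + B).det = ∑ s : Finset n, (of fun i c => if c ∈ s then A i c else B i c).det := by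
  rw [← det_transpose, transpose_add]
  refine (detRowAlternating.map_add_univ Aᵀ Bᵀ).trans (sum_congr rfl fun s _ => ?_)
  rw [← det_transpose]
  congr 1
  ext i c
  simp only [Finset.piecewise, transpose_apply, of_apply]
  split_ifs <;> rfl

theorem coeff_det_map_add_X_smul_map (A B : Matrix n n R) (j : ℕ) :
    (A.map C + (X : R[X]) • B.map C).det.coeff j =
      ∑ s ∈ powersetCard j univ, (of fun i c => if c ∈ s then B i c else A i c).det := by
  rw [add_comm, det_add_eq_sum_piecewise_cols]
  have hcol (s : Finset n) :
      (of fun i c => if c ∈ s then ((X : R[X]) • B.map C) i c else A.map C i c).det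
        = X ^ s.card * C (of fun i c => if c ∈ s then B i c else A i c).det := by
    rw [RingHom.map_det, ← prod_const, ← Fintype.prod_ite_mem s (fun _ => (X : R[X])),
      ← det_mul_row]
    congr 1
    ext i c
    by_cases hc : c ∈ s <;> simp [hc]
  simp only [hcol, finsetSum_coeff, mul_comm (X ^ _), coeff_C_mul_X_pow]
  rw [← sum_filter, powersetCard_eq_filter, powerset_univ]
  simp only [eq_comm]

end Determinants

section SchurDet

variable {R : Type*} [CommRing R]

theorem schurDet_eq_zero_of_succ_eq {n : ℕ} (a : ℤ → R) (mu : Fin (n + 1) → ℤ) (i : Fin n)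
    (hi : mu i.succ = mu i.castSucc + 1) : schurDet a mu = 0 :=
  det_zero_of_column_eq (Fin.castSucc_lt_succ (i := i)).ne fun k => by
    simp only [of_apply, hi, Fin.val_succ, Fin.val_castSucc]
    push_cast
    ring_nf

theorem schurDet_add_indicator_eq_zero {r : ℕ} (a : ℤ → R) (lam : Fin r → ℕ) (hlam : Antitone lam)
    (S : Finset (Fin r)) (hS : ¬Antitone fun k => (lam k : ℤ) + if k ∈ S then 1 else 0) :
    schurDet a (fun k => (lam k : ℤ) + if k ∈ S then 1 else 0) = 0 := by
  cases r with
  | zero => exact absurd (Subsingleton.antitone _) hS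
  | succ n =>
    obtain ⟨i, hi⟩ := not_forall.1 (mt Fin.antitone_iff_succ_le.2 hS)
    have hlam_i := hlam (Fin.castSucc_lt_succ (i := i)).le
    refine schurDet_eq_zero_of_succ_eq a _ i ?_
    split_ifs at hi ⊢ <;> omega

theorem stripSumAdd_eq_sum {r : ℕ} (a : ℤ → R) (lam : Fin r → ℕ) (hlam : Antitone lam) (j : ℕ) :
    stripSumAdd a lam j = ∑ S ∈ powersetCard j univ,
      schurDet a (fun k => (lam k : ℤ) + if k ∈ S then 1 else 0) :=
  sum_congr rfl fun S _ => ite_eq_left_iff.2 fun hS =>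
    (schurDet_add_indicator_eq_zero a lam hlam S hS).symm

end SchurDet

section Companion

variable {R : Type*} [CommRing R]

/-- The companion matrix of `Σ_i (-1)^i e_i t^(n-i)`. -/
def companionMatrix (e : ℕ → R) (n : ℕ) : Matrix (Fin n) (Fin n) R :=
  of fun i k =>
    if (i : ℕ) + 1 = n then (-1) ^ (n - k + 1) * e (n - k) else if (k : ℕ) = i + 1 then 1 else 0

theorem companionMatrix_submatrix_succ (e : ℕ → R) (n : ℕ) :
    (companionMatrix e (n + 2)).submatrix Fin.succ Fin.succ = companionMatrix e (n + 1) := by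
  ext a b
  have hsub : n + 2 - (b + 1 : ℕ) = n + 1 - b := by omega
  simp only [companionMatrix, submatrix_apply, of_apply, Fin.val_succ, hsub]
  congr 1 <;> simp only [add_left_inj]

theorem det_one_add_X_smul_companionMatrix (e : ℕ → R) (he0 : e 0 = 1) :
    ∀ n, (1 + (X : R[X]) • (companionMatrix e n).map C).det =
      ∑ m ∈ range (n + 1), C (e m) * X ^ m
  | 0 => by simp [he0]
  | 1 => by
    rw [det_fin_one]
    simp [companionMatrix, sum_range_succ, he0]
  | n + 2 => by
    set P := 1 + (X : R[X]) • (companionMatrix e (n + 2)).map C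
    have hfirst :
        P.submatrix Fin.succ Fin.succ = 1 + (X : R[X]) • (companionMatrix e (n + 1)).map C := by
      rw [← companionMatrix_submatrix_succ]
      ext a b
      simp [P, one_apply]
    have hlast : (P.submatrix Fin.castSucc Fin.succ).det = X ^ (n + 1) := by
      have hentry (a b : Fin (n + 1)) : P.submatrix Fin.castSucc Fin.succ a b =
          (if (b : ℕ) + 1 = a then 1 else 0) + if b = a then X else 0 := by
        have ha : (a : ℕ) ≠ n + 1 := a.isLt.ne
        simp [P, one_apply, companionMatrix, Fin.ext_iff, ha, eq_comm]
      rw [det_of_isLowerTriangular _ fun a b hab => by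
        rw [OrderDual.toDual_lt_toDual, Fin.lt_def] at hab
        rw [hentry, if_neg (by omega), if_neg (by omega), add_zero],
        prod_congr rfl fun i _ => hentry i i]
      simp
    have hmid (i : Fin n) : P i.castSucc.succ 0 = 0 := by
      simp [P, one_apply, companionMatrix, Fin.ext_iff, i.isLt.ne]
    rw [det_succ_column_zero, Fin.sum_univ_succ, Fin.sum_univ_castSucc]
    simp only [hmid, mul_zero, zero_mul, sum_const_zero, zero_add, Fin.succAbove_zero, hfirst,
      Fin.succ_last, Fin.succAbove_last, det_one_add_X_smul_companionMatrix e he0 (n + 1), hlast]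
    have hP00 : P 0 0 = 1 := by simp [P, companionMatrix]
    have hPlast : P (Fin.last (n + 1)) 0 = X * C ((-1) ^ (n + 3) * e (n + 2)) := by
      simp [P, companionMatrix, one_apply]
    have hsign : (-1 : R[X]) ^ (n + 1) * (-1) ^ (n + 3) = 1 := by
      rw [← pow_add]
      exact Even.neg_one_pow ⟨n + 2, by ring⟩
    simp only [Nat.succ_eq_add_one, hP00, hPlast, Fin.val_zero, Fin.val_last,
      sum_range_succ _ (n + 2), map_mul, map_pow, map_neg, map_one]
    linear_combination (C (e (n + 2)) * X ^ (n + 2)) * hsign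

end Companion

section Pieri

variable {R : Type*} [CommRing R] {r : ℕ} {e : ℕ → R} {h : ℤ → R}

theorem recurrence_of_conv (he0 : e 0 = 1)
    (hconv : ∀ n : ℤ, ∑ i ∈ range (r + 1), (-1 : R) ^ i * e i * h (n - i) = if n = 0 then 1 else 0)
    {n : ℤ} (hn : n + r ≠ 0) :
    ∑ k : Fin r, (-1) ^ (r - k + 1) * e (r - k) * h (n + k) = h (n + r) := by
  have H := hconv (n + r)
  rw [if_neg hn, sum_range_succ'] at H
  simp only [pow_zero, he0, mul_one, one_mul, Nat.cast_zero, sub_zero] at H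
  rw [Fin.sum_univ_eq_sum_range (fun k => (-1) ^ (r - k + 1) * e (r - k) * h (n + k)),
    ← sum_range_reflect]
  have hterm (i : ℕ) (hi : i ∈ range r) :
      (-1 : R) ^ (r - (r - 1 - i) + 1) * e (r - (r - 1 - i)) * h (n + (r - 1 - i : ℕ)) =
        -((-1) ^ (i + 1) * e (i + 1) * h (n + r - (i + 1 : ℕ))) := by
    have hi : i < r := mem_range.1 hi
    rw [show r - (r - 1 - i) = i + 1 by omega,
      show n + (r - 1 - i : ℕ) = n + r - (i + 1 : ℕ) by omega, pow_succ]
    ring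
  rw [sum_congr rfl hterm, sum_neg_distrib]
  linear_combination -H

def jacobiTrudiMatrix (a : ℤ → R) (m : Fin r → ℤ) : Matrix (Fin r) (Fin r) R :=
  of fun i c => a (m c + i)

theorem companionMatrix_mul_jacobiTrudiMatrix (he0 : e 0 = 1)
    (hconv : ∀ n : ℤ, ∑ i ∈ range (r + 1), (-1 : R) ^ i * e i * h (n - i) = if n = 0 then 1 else 0)
    {m : Fin r → ℤ} (hm : ∀ c, m c + r ≠ 0) :
    companionMatrix e r * jacobiTrudiMatrix h m = jacobiTrudiMatrix h (m + 1) := by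
  ext i c
  simp only [mul_apply, companionMatrix, jacobiTrudiMatrix, of_apply, Pi.add_apply, Pi.one_apply]
  split_ifs with hi
  · rw [recurrence_of_conv he0 hconv (hm c)]
    congr 1
    omega
  · have hi' : (i : ℕ) + 1 < r := by omega
    rw [Fintype.sum_eq_single ⟨i + 1, hi'⟩ fun k hk => by
      rw [if_neg fun h => hk (Fin.ext h), zero_mul]]
    simp only [if_true, one_mul]
    congr 1
    push_cast
    ring

theorem pieri_schurDet (he0 : e 0 = 1)
    (hconv : ∀ n : ℤ, ∑ i ∈ range (r + 1), (-1 : R) ^ i * e i * h (n - i) = if n = 0 then 1 else 0)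
    {mu : Fin r → ℤ} (hmu : ∀ c : Fin r, mu c - c + r ≠ 0) {j : ℕ} (hj : j ≤ r) :
    e j * schurDet h mu =
      ∑ s ∈ powersetCard j univ, schurDet h (fun c => mu c + if c ∈ s then 1 else 0) := by
  set V := jacobiTrudiMatrix h (fun c => mu c - c)
  have hfactor : V.map C + (X : R[X]) • (jacobiTrudiMatrix h (fun c => mu c - c + 1)).map C =
      (1 + (X : R[X]) • (companionMatrix e r).map C) * V.map C := by
    rw [add_mul, one_mul, smul_mul_assoc, ← Matrix.map_mul,
      companionMatrix_mul_jacobiTrudiMatrix he0 hconv hmu]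
    rfl
  have hmixed (s : Finset (Fin r)) :
      (of fun i c => if c ∈ s then jacobiTrudiMatrix h (fun c => mu c - c + 1) i c else V i c).det =
        schurDet h (fun c => mu c + if c ∈ s then 1 else 0) := by
    congr 1
    ext i c
    simp only [V, jacobiTrudiMatrix, of_apply]
    split_ifs <;> ring_nf
  calc e j * schurDet h mu
      = ((1 + (X : R[X]) • (companionMatrix e r).map C).det * C V.det).coeff j := by
        rw [det_one_add_X_smul_companionMatrix e he0, coeff_mul_C, finsetSum_coeff]
        simp only [coeff_C_mul_X_pow]
        rw [sum_ite_eq, if_pos (mem_range.2 (Nat.lt_succ_of_le hj))]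
        rfl
    _ = ∑ s ∈ powersetCard j univ, schurDet h (fun c => mu c + if c ∈ s then 1 else 0) := by
        rw [RingHom.map_det, RingHom.mapMatrix_apply, ← det_mul, ← hfactor,
          coeff_det_map_add_X_smul_map]
        exact sum_congr rfl fun s _ => hmixed s

end Pieri

theorem stmt_14_general (r : ℕ)
    (e : ℕ → MvPolynomial (Fin r) ℚ)
    (he0 : e 0 = 1)
    (h : ℤ → MvPolynomial (Fin r) ℚ)
    (hconv : ∀ n : ℤ,
      ∑ i ∈ Finset.range (r + 1),
          (-1 : MvPolynomial (Fin r) ℚ) ^ i * e i * h (n - (i : ℤ)) =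
        if n = 0 then 1 else 0)
    : ∀ j : ℕ, j ≤ r → ∀ lam : Fin r → ℕ, Antitone lam →
      e j * schurDet h (fun k => (lam k : ℤ)) = stripSumAdd h lam j := by
  intro j hj lam hlam
  rw [stripSumAdd_eq_sum h lam hlam]
  exact pieri_schurDet he0 hconv (fun c => by omega) hj

theorem stmt_14 (r : ℕ) (hr : 1 ≤ r)
    (e : ℕ → MvPolynomial (Fin r) ℚ)
    (he0 : e 0 = 1)
    (heX : ∀ i : Fin r, e ((i : ℕ) + 1) = MvPolynomial.X i)
    (heTop : ∀ i : ℕ, r < i → e i = 0)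
    (h : ℤ → MvPolynomial (Fin r) ℚ)
    (hhneg : ∀ n : ℤ, n < 0 → h n = 0)
    (hconv : ∀ n : ℤ,
      ∑ i ∈ Finset.range (r + 1),
          (-1 : MvPolynomial (Fin r) ℚ) ^ i * e i * h (n - (i : ℤ)) =
        if n = 0 then 1 else 0)
    : ∀ j : ℕ, j ≤ r → ∀ lam : Fin r → ℕ, Antitone lam →
      e j * schurDet h (fun k => (lam k : ℤ)) = stripSumAdd h lam j :=
  stmt_14_general r e he0 h hconv
end
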